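/- Let E and F be finite-dimensional real inner product spaces, let T : E → E and M : E → F be linear maps, and let N_t ≥ 1 be a natural number. Given a source sequence S = (S_0, …, S_{N_t−1}) in E, define the state sequence X_0, …, X_{N_t−1} in E by X_0 = S_0 and X_{n+1} = T X_n + S_{n+1} for 0 ≤ n ≤ N_t−2, and define the measurement map H : E^{N_t} → F^{N_t} by H(S)_n = M X_n. Given data P̂ = (P̂_0, …, P̂_{N_t−1}) in F, define the adjoint state sequence X*_{N_t−1}, X*_{N_t−2}, …, X*_{−1} in E backwards by X*_{N_t−1} = 0 and X*_{n−1} = T* X*_n + M* P̂_n for n = N_t−1 down to 0, where T* and M* denote the adjoint linear maps. Then ⟨H(S), P̂⟩ = ⟨S, X*⟩, i.e. ∑_{n=0}^{N_t−1} ⟨M X_n, P̂_n⟩_F = ∑_{n=0}^{N_t−1} ⟨S_n, X*_{n−1}⟩_E. In particular the adjoint of H maps P̂ to the sequence (X*_{−1}, X*_{0}, …, X*_{N_t−2}). -/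

import Mathlib

/-!
Pairing the adjoint recurrence with `Xₙ` gives
`⟪Sₙ, X*ₙ₋₁⟫ - ⟪M Xₙ, Pₙ⟫ = ⟪Sₙ - Xₙ, X*ₙ₋₁⟫ + ⟪T Xₙ, X*ₙ⟫`, and the forward recurrence
`Sₙ - Xₙ = -T Xₙ₋₁` (with `S₀ - X₀ = 0`) turns the right-hand side into a telescoping
difference of `⟪T Xₙ, X*ₙ⟫`. The sum over `0 ≤ n ≤ Nt - 1` therefore collapses to
`⟪T X_{Nt-1}, X*_{Nt-1}⟫ = 0`.
-/

open Finset

theorem Int.sum_Icc_eq_of_eq_sub {G : Type*} [AddCommGroup G] (d f : ℤ → G) {a b : ℤ}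
    (hab : a ≤ b) (ha : d a = f a) (hd : ∀ n, a < n → n ≤ b → d n = f n - f (n - 1)) :
    ∑ n ∈ Icc a b, d n = f b := by
  induction b, hab using Int.leInduction with
  | base => rw [Icc_self, sum_singleton, ha]
  | succ b hab ih =>
    rw [← insert_Icc_right_eq_Icc_add_one (by omega), sum_insert (by simp),
      ih fun n hn hnb => hd n hn (by omega), hd (b + 1) (by omega) le_rfl, add_sub_cancel_right,
      sub_add_cancel]

section AdjointStep

variable {𝕜 E F : Type*} [RCLike 𝕜] [NormedAddCommGroup E] [InnerProductSpace 𝕜 E]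
  [FiniteDimensional 𝕜 E] [NormedAddCommGroup F] [InnerProductSpace 𝕜 F] [FiniteDimensional 𝕜 F]

theorem inner_sub_inner_eq_of_eq_adjoint_add_adjoint (T : E →ₗ[𝕜] E) (M : E →ₗ[𝕜] F)
    {s x y y' : E} {p : F} (hy' : y' = LinearMap.adjoint T y + LinearMap.adjoint M p) :
    inner 𝕜 s y' - inner 𝕜 (M x) p = inner 𝕜 (s - x) y' + inner 𝕜 (T x) y := by
  have hM : inner 𝕜 (M x) p = inner 𝕜 x y' - inner 𝕜 (T x) y := by
    rw [hy', inner_add_right, LinearMap.adjoint_inner_right, LinearMap.adjoint_inner_right,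
      add_sub_cancel_left]
  rw [hM, inner_sub_left]
  ring

end AdjointStep

/-- The adjoint of the discretised photoacoustic time-stepping forward model
(Lemma 2 of the paper): if `X` is the state sequence driven by the source `S`
via `X 0 = S 0`, `X (n+1) = T (X n) + S (n+1)`, and `Xs` is the adjoint state
sequence computed backwards by `Xs (Nt-1) = 0`, `Xs (n-1) = T* (Xs n) + M* (P n)`,
then `⟨H S, P⟩ = ⟨S, Xs⟩`, i.e.
`∑_{n=0}^{Nt-1} ⟨M (X n), P n⟩ = ∑_{n=0}^{Nt-1} ⟨S n, Xs (n-1)⟩`. -/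
theorem discretised_adjoint_inner_product
    {E F : Type*} [NormedAddCommGroup E] [InnerProductSpace ℝ E] [FiniteDimensional ℝ E]
    [NormedAddCommGroup F] [InnerProductSpace ℝ F] [FiniteDimensional ℝ F]
    (T : E →ₗ[ℝ] E) (M : E →ₗ[ℝ] F) (Nt : ℕ) (hNt : 1 ≤ Nt)
    (S : ℤ → E) (X : ℤ → E) (P : ℤ → F) (Xs : ℤ → E)
    (hX0 : X 0 = S 0)
    (hX : ∀ n : ℤ, 0 ≤ n → n + 1 ≤ (Nt : ℤ) - 1 → X (n + 1) = T (X n) + S (n + 1))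
    (hXsN : Xs ((Nt : ℤ) - 1) = 0)
    (hXs : ∀ n : ℤ, 0 ≤ n → n ≤ (Nt : ℤ) - 1 →
      Xs (n - 1) = (LinearMap.adjoint T) (Xs n) + (LinearMap.adjoint M) (P n)) :
    ∑ n ∈ Finset.Icc (0 : ℤ) ((Nt : ℤ) - 1), (inner ℝ (M (X n)) (P n) : ℝ)
      = ∑ n ∈ Finset.Icc (0 : ℤ) ((Nt : ℤ) - 1), (inner ℝ (S n) (Xs (n - 1)) : ℝ) := by
  have hstep : ∀ n, 0 ≤ n → n ≤ (Nt : ℤ) - 1 →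
      inner ℝ (S n) (Xs (n - 1)) - inner ℝ (M (X n)) (P n)
        = inner ℝ (S n - X n) (Xs (n - 1)) + inner ℝ (T (X n)) (Xs n) := fun n h0 hn ↦
    inner_sub_inner_eq_of_eq_adjoint_add_adjoint T M (hXs n h0 hn)
  have htelescope : ∑ n ∈ Icc (0 : ℤ) (Nt - 1),
      (inner ℝ (S n) (Xs (n - 1)) - inner ℝ (M (X n)) (P n))
        = inner ℝ (T (X (Nt - 1))) (Xs (Nt - 1)) := by
    refine Int.sum_Icc_eq_of_eq_sub _ (fun n ↦ inner ℝ (T (X n)) (Xs n)) (by omega) ?_ ?_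
    · rw [hstep 0 le_rfl (by omega), hX0, sub_self, inner_zero_left, zero_add]
    · intro n h0 hn
      have hsource : S n - X n = -T (X (n - 1)) := by
        have hX' := hX (n - 1) (by omega) (by omega)
        rw [sub_add_cancel] at hX'
        rw [hX', sub_add_cancel_right]
      rw [hstep n (by omega) hn, hsource, inner_neg_left, neg_add_eq_sub]
  rw [hXsN, inner_zero_right, sum_sub_distrib, sub_eq_zero] at htelescope
  exact htelescope.symm
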